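/- For nonnegative integers j, k and all real p, q with z = p + iq: V(e_j, e_{j+k})(p, q) = (-1)^k (j! / (2π · 2^k · (j+k)!))^{1/2} · z̄^k · L_j^{(k)}(|z|²/2) · e^{-|z|²/4}. -/

import Mathlib

open MeasureTheory Complex Real

noncomputable def Hphys (n : ℕ) (x : ℝ) : ℝ :=
  (-1 : ℝ)^n * Real.exp (x^2) * iteratedDeriv n (fun t : ℝ => Real.exp (-t^2)) x

noncomputable def hFun (n : ℕ) (x : ℝ) : ℝ := Real.exp (-x^2/2) * Hphys n x

noncomputable def Hc (m n : ℕ) (z : ℂ) : ℂ :=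
  ∑ k ∈ Finset.range (min m n + 1),
    (-1 : ℂ)^k * (Nat.factorial k : ℂ) * (Nat.choose m k : ℂ) * (Nat.choose n k : ℂ)
      * z^(m-k) * (starRingEnd ℂ z)^(n-k)

noncomputable def Lag (n α : ℕ) (x : ℂ) : ℂ :=
  ∑ k ∈ Finset.range (n + 1),
    (-1 : ℂ)^k * (Nat.choose (n + α) (n - k) : ℂ) * x^k / (Nat.factorial k : ℂ)

noncomputable def eFun (n : ℕ) (x : ℝ) : ℝ :=
  hFun n x / Real.sqrt (2^n * (Nat.factorial n : ℝ) * Real.sqrt Real.pi)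

noncomputable def FW2 (f g : ℝ → ℂ) (p q : ℝ) : ℂ :=
  ((2 * Real.pi) ^ (-(1:ℝ)/2) : ℝ) *
    ∫ y : ℝ, Complex.exp (Complex.I * y * q) * f (y + p/2) * (starRingEnd ℂ) (g (y - p/2))

/-!
The Hermite functions obey the ladder relations `h_n' = x h_n - h_{n+1}` and
`h_{n+1} = 2x h_n - 2n h_{n-1}`. The function `y ↦ e^{iyq} h_m(y + p/2) h_n(y - p/2)` is a
polynomial times a Gaussian, so the integral of its derivative vanishes; expanding that
derivative with the ladder relations gives, with `z = p + iq`, the recurrences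
`I(m+1, n) = z I(m, n) + 2n I(m, n-1)` and `I(m, n+1) = -z̄ I(m, n) + 2m I(m-1, n)` for the
unnormalised transforms `I(m, n)`, starting from the Gaussian integral
`I(0, 0) = √π e^{-|z|²/4}`. Along each diagonal `n = m + k` these are solved by
`√π e^{-|z|²/4} 2^j j! (-z̄)^k L_j^{(k)}(|z|²/2)`, thanks to the Laguerre recurrence
`(j+1) L_{j+1}^{(k)} = (j+k+1) L_j^{(k)} - x L_j^{(k+1)}`.
-/

open Polynomial

/-- Physicists' Hermite polynomials (Mathlib's `Polynomial.hermite` are the probabilists' ones). -/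
noncomputable def physHermite : ℕ → ℝ[X]
  | 0 => 1
  | n + 1 => 2 * X * physHermite n - derivative (physHermite n)

theorem physHermite_succ (n : ℕ) :
    physHermite (n + 1) = 2 * X * physHermite n - derivative (physHermite n) := rfl

theorem derivative_physHermite_succ (n : ℕ) :
    derivative (physHermite (n + 1)) = 2 * (n + 1 : ℝ[X]) * physHermite n := by
  induction n with
  | zero => simp [physHermite]
  | succ n ih =>
    rw [physHermite_succ (n + 1)]
    simp only [derivative_sub, derivative_mul, derivative_ofNat, derivative_X, ih,
      derivative_natCast, derivative_add, derivative_one]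
    rw [physHermite_succ n]
    push_cast
    ring

theorem iteratedDeriv_exp_neg_sq (n : ℕ) :
    iteratedDeriv n (fun t : ℝ => rexp (-t ^ 2))
      = fun x => (-1) ^ n * (physHermite n).eval x * rexp (-x ^ 2) := by
  induction n with
  | zero => simp [physHermite]
  | succ n ih =>
    ext x
    have hexp : HasDerivAt (fun t : ℝ => rexp (-t ^ 2)) (rexp (-x ^ 2) * -(2 * x)) x := by
      simpa using ((hasDerivAt_pow 2 x).neg).exp
    rw [iteratedDeriv_succ, ih,
      ((((physHermite n).hasDerivAt x).const_mul ((-1) ^ n)).fun_mul hexp).deriv, physHermite_succ]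
    simp only [eval_sub, eval_mul, eval_ofNat, eval_X]
    ring

theorem Hphys_eq_eval (n : ℕ) (x : ℝ) : Hphys n x = (physHermite n).eval x := by
  have hsign : (-1 : ℝ) ^ n * (-1) ^ n = 1 := by rw [← mul_pow]; norm_num
  rw [Hphys, iteratedDeriv_exp_neg_sq]
  dsimp only
  rw [Real.exp_neg]
  field_simp
  linear_combination (eval x (physHermite n)) * hsign

theorem hFun_eq (n : ℕ) (x : ℝ) : hFun n x = (physHermite n).eval x * rexp (-x ^ 2 / 2) := by
  rw [hFun, Hphys_eq_eval, mul_comm]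

theorem hFun_succ (n : ℕ) (x : ℝ) :
    hFun (n + 1) x = 2 * x * hFun n x - 2 * n * hFun (n - 1) x := by
  cases n with
  | zero => simp [hFun_eq, physHermite]
  | succ n =>
    simp only [hFun_eq, physHermite_succ (n + 1), derivative_physHermite_succ, eval_sub, eval_mul,
      eval_ofNat, eval_X, eval_add, eval_natCast, eval_one, Nat.add_sub_cancel]
    push_cast
    ring

theorem hasDerivAt_hFun (n : ℕ) (x : ℝ) :
    HasDerivAt (hFun n) (x * hFun n x - hFun (n + 1) x) x := by
  have hexp : HasDerivAt (fun t : ℝ => rexp (-t ^ 2 / 2)) (rexp (-x ^ 2 / 2) * -x) x :=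
    ((hasDerivAt_pow 2 x).fun_neg.div_const 2).exp.congr_deriv (by ring)
  rw [show hFun n = fun t => (physHermite n).eval t * rexp (-t ^ 2 / 2) from funext (hFun_eq n)]
  refine ((physHermite n).hasDerivAt x |>.fun_mul hexp).congr_deriv ?_
  simp only [hFun_eq, physHermite_succ, eval_sub, eval_mul, eval_ofNat, eval_X]
  ring

theorem integrable_eval_mul_exp_neg_mul_sq {b : ℝ} (hb : 0 < b) (P : ℝ[X]) :
    Integrable fun x : ℝ => P.eval x * rexp (-b * x ^ 2) := by
  simp_rw [eval_eq_sum_range, Finset.sum_mul]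
  refine integrable_finsetSum _ fun i _ => ?_
  simpa [mul_assoc, Real.rpow_natCast] using
    (integrable_rpow_mul_exp_neg_mul_sq hb (neg_one_lt_zero.trans_le i.cast_nonneg)).const_mul
      (P.coeff i)

theorem hFun_shift_mul_eq (m n : ℕ) (a : ℝ) : ∃ B : ℝ[X], ∀ y : ℝ,
    hFun m (y + a) * hFun n (y - a) = B.eval y * rexp (-1 * y ^ 2) := by
  refine ⟨C (rexp (-a ^ 2)) * ((physHermite m).comp (X + C a) * (physHermite n).comp (X - C a)),
    fun y => ?_⟩
  simp only [hFun_eq, eval_mul, eval_C, eval_comp, eval_add, eval_sub, eval_X]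
  rw [show rexp (-1 * y ^ 2) = rexp (-(y + a) ^ 2 / 2) * rexp (-(y - a) ^ 2 / 2) * rexp (a ^ 2) by
    rw [← Real.exp_add, ← Real.exp_add]; ring_nf]
  rw [Real.exp_neg]
  field_simp

theorem integrable_hFun_shift_mul (m n : ℕ) (a : ℝ) :
    Integrable fun y : ℝ => hFun m (y + a) * hFun n (y - a) := by
  obtain ⟨B, hB⟩ := hFun_shift_mul_eq m n a
  simpa only [hB] using integrable_eval_mul_exp_neg_mul_sq one_pos B

noncomputable def fwIntegrand (m n : ℕ) (p q y : ℝ) : ℂ :=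
  cexp (I * y * q) * hFun m (y + p / 2) * hFun n (y - p / 2)

noncomputable def fwHermite (m n : ℕ) (p q : ℝ) : ℂ := ∫ y : ℝ, fwIntegrand m n p q y

theorem integrable_fwIntegrand (m n : ℕ) (p q : ℝ) : Integrable (fwIntegrand m n p q) := by
  have hexp : Continuous fun y : ℝ => cexp (I * y * q) := by fun_prop
  refine ((integrable_hFun_shift_mul m n (p / 2)).ofReal.bdd_mul (c := 1)
    hexp.aestronglyMeasurable (ae_of_all _ fun y => ?_)).congr (ae_of_all _ fun y => ?_)
  · rw [Complex.norm_exp]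
    simp
  · simp [fwIntegrand, mul_assoc]

theorem hasDerivAt_fwIntegrand (m n : ℕ) (p q y : ℝ) :
    HasDerivAt (fwIntegrand m n p q)
      (cexp (I * y * q) * (I * q * hFun m (y + p / 2) * hFun n (y - p / 2)
        + ((y + p / 2) * hFun m (y + p / 2) - hFun (m + 1) (y + p / 2)) * hFun n (y - p / 2)
        + hFun m (y + p / 2) * ((y - p / 2) * hFun n (y - p / 2) - hFun (n + 1) (y - p / 2))))
      y := by
  have hexp : HasDerivAt (fun t : ℝ => cexp (I * t * q)) (cexp (I * y * q) * (I * q)) y := by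
    simpa using ((((hasDerivAt_id y).ofReal_comp).const_mul I).mul_const (q : ℂ)).cexp
  have hm := ((hasDerivAt_hFun m (y + p / 2)).comp_add_const y (p / 2)).ofReal_comp
  have hn := ((hasDerivAt_hFun n (y - p / 2)).comp_sub_const y (p / 2)).ofReal_comp
  refine ((hexp.fun_mul hm).fun_mul hn).congr_deriv ?_
  push_cast
  ring

theorem fwHermite_eq_of_hasDerivAt {m n m₁ n₁ m₂ n₂ : ℕ} {p q : ℝ} (a c : ℂ)
    (hderiv : ∀ y, HasDerivAt (fwIntegrand m n p q) (a * fwIntegrand m n p q y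
      - fwIntegrand m₁ n₁ p q y + c * fwIntegrand m₂ n₂ p q y) y) :
    fwHermite m₁ n₁ p q = a * fwHermite m n p q + c * fwHermite m₂ n₂ p q := by
  have hint := fun m n => integrable_fwIntegrand m n p q
  have hsub : Integrable fun y => a * fwIntegrand m n p q y - fwIntegrand m₁ n₁ p q y :=
    ((hint m n).const_mul _).sub (hint m₁ n₁)
  have h := integral_eq_zero_of_hasDerivAt_of_integrable hderiv
    (hsub.add ((hint m₂ n₂).const_mul _)) (hint m n)
  rw [integral_add hsub ((hint m₂ n₂).const_mul _),
    integral_sub ((hint m n).const_mul _) (hint m₁ n₁), integral_const_mul,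
    integral_const_mul] at h
  simp only [fwHermite]
  linear_combination -h

theorem fwHermite_succ_left (m n : ℕ) (p q : ℝ) :
    fwHermite (m + 1) n p q
      = (p + I * q) * fwHermite m n p q + 2 * n * fwHermite m (n - 1) p q :=
  fwHermite_eq_of_hasDerivAt _ _ fun y => (hasDerivAt_fwIntegrand m n p q y).congr_deriv (by
    simp only [fwIntegrand]
    rw [hFun_succ n]
    push_cast
    ring)

theorem fwHermite_succ_right (m n : ℕ) (p q : ℝ) :
    fwHermite m (n + 1) p q
      = -(p - I * q) * fwHermite m n p q + 2 * m * fwHermite (m - 1) n p q :=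
  fwHermite_eq_of_hasDerivAt _ _ fun y => (hasDerivAt_fwIntegrand m n p q y).congr_deriv (by
    simp only [fwIntegrand]
    rw [hFun_succ m]
    push_cast
    ring)

theorem fwHermite_zero_zero (p q : ℝ) :
    fwHermite 0 0 p q = √π * cexp (-(p ^ 2 + q ^ 2) / 4) := by
  have hquad :
      ∀ y : ℝ, fwIntegrand 0 0 p q y = cexp (-1 * y ^ 2 + I * q * y + -(p ^ 2 / 4)) := by
    intro y
    simp only [fwIntegrand, hFun_eq, physHermite, eval_one, one_mul, Complex.ofReal_exp,
      ← Complex.exp_add]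
    congr 1
    push_cast
    ring
  have hsqrt : (π : ℂ) ^ (1 / 2 : ℂ) = √π := by
    rw [Real.sqrt_eq_rpow, Complex.ofReal_cpow Real.pi_pos.le]
    norm_num
  simp only [fwHermite, hquad]
  rw [integral_cexp_quadratic (by norm_num), neg_neg, div_one, hsqrt]
  congr 2
  linear_combination ((q : ℂ) ^ 2 / 4) * I_sq

open Finset in
theorem succ_mul_Lag_succ (j k : ℕ) (x : ℂ) :
    (j + 1) * Lag (j + 1) k x = (j + k + 1) * Lag j k x - x * Lag j (k + 1) x := by
  set t : ℕ → ℂ := fun l =>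
    (-1) ^ l * ((j + 1 + k).choose (j + 1 - l) : ℂ) * x ^ l / l.factorial
  have hsplit : (j + 1) * Lag (j + 1) k x
      = ∑ l ∈ range (j + 2), ((j + 1 - l : ℕ) : ℂ) * t l
        + ∑ l ∈ range (j + 2), (l : ℂ) * t l := by
    rw [Lag, mul_sum, ← sum_add_distrib]
    refine sum_congr rfl fun l hl => ?_
    rw [← add_mul, ← Nat.cast_add, Nat.sub_add_cancel (mem_range_succ_iff.mp hl)]
    push_cast
    rfl
  have hA : ∑ l ∈ range (j + 2), ((j + 1 - l : ℕ) : ℂ) * t l = (j + k + 1) * Lag j k x := by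
    rw [sum_range_succ, Nat.sub_self, Nat.cast_zero, zero_mul, add_zero, Lag, mul_sum]
    refine sum_congr rfl fun l hl => ?_
    have hchoose :
        (j + 1 - l) * (j + 1 + k).choose (j + 1 - l) = (j + k + 1) * (j + k).choose (j - l) := by
      rw [Nat.add_one_mul_choose_eq, show j + 1 - l = j - l + 1 by have := mem_range.mp hl; omega,
        show j + 1 + k = j + k + 1 by ring, mul_comm]
    have hcast := congrArg (Nat.cast : ℕ → ℂ) hchoose
    push_cast at hcast
    simp only [t]
    linear_combination ((-1) ^ l * x ^ l / l.factorial) * hcast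
  have hB : ∑ l ∈ range (j + 2), (l : ℂ) * t l = -(x * Lag j (k + 1) x) := by
    rw [sum_range_succ', Nat.cast_zero, zero_mul, add_zero, Lag, mul_sum, ← sum_neg_distrib]
    refine sum_congr rfl fun l _ => ?_
    simp only [t, Nat.add_sub_add_right, Nat.factorial_succ, pow_succ]
    rw [show j + 1 + k = j + (k + 1) by ring]
    push_cast
    field_simp
  rw [hsplit, hA, hB]
  ring

theorem fwHermite_zero_left (n : ℕ) (p q : ℝ) :
    fwHermite 0 n p q = √π * cexp (-(p ^ 2 + q ^ 2) / 4) * (-(p - I * q)) ^ n := by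
  induction n with
  | zero => simp [fwHermite_zero_zero]
  | succ n ih =>
    rw [fwHermite_succ_right, ih, Nat.cast_zero]
    ring

theorem fwHermite_eq_Lag (j k : ℕ) (p q : ℝ) :
    fwHermite j (j + k) p q = √π * cexp (-(p ^ 2 + q ^ 2) / 4) * 2 ^ j * j.factorial
      * (-(p - I * q)) ^ k * Lag j k ((p ^ 2 + q ^ 2) / 2) := by
  induction j generalizing k with
  | zero => simp [fwHermite_zero_left, Lag]
  | succ j ih =>
    have hnormSq : (p + I * q) * (p - I * q) = (p : ℂ) ^ 2 + (q : ℂ) ^ 2 := by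
      linear_combination (-(q : ℂ) ^ 2) * I_sq
    have hLag := succ_mul_Lag_succ j k (((p : ℂ) ^ 2 + (q : ℂ) ^ 2) / 2)
    rw [show j + 1 + k = j + k + 1 by ring, fwHermite_succ_left, Nat.add_sub_cancel,
      show j + k + 1 = j + (k + 1) by ring, ih, ih, Nat.factorial_succ]
    push_cast
    set K := √π * cexp (-(p ^ 2 + q ^ 2) / 4) * 2 ^ j * j.factorial * (-(p - I * q)) ^ k
    linear_combination (-2 * K) * hLag - K * Lag j (k + 1) ((p ^ 2 + q ^ 2) / 2) * hnormSq

theorem FW2_eFun (m n : ℕ) (p q : ℝ) :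
    FW2 (fun x => (eFun m x : ℂ)) (fun x => (eFun n x : ℂ)) p q
      = ((2 * π) ^ (-(1 : ℝ) / 2)
          / (√(2 ^ m * m.factorial * √π) * √(2 ^ n * n.factorial * √π)) : ℝ)
        * fwHermite m n p q := by
  rw [FW2, fwHermite, ← integral_const_mul, ← integral_const_mul]
  congr 1 with y
  simp only [eFun, fwIntegrand, Complex.conj_ofReal]
  push_cast
  ring

theorem FW2_eFun_const (j k : ℕ) :
    (2 * π) ^ (-(1 : ℝ) / 2)
          / (√(2 ^ j * j.factorial * √π) * √(2 ^ (j + k) * (j + k).factorial * √π))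
        * (√π * 2 ^ j * j.factorial)
      = √(j.factorial / (2 * π * 2 ^ k * (j + k).factorial)) := by
  rw [show -(1 : ℝ) / 2 = -(1 / 2) by ring, Real.rpow_neg (by positivity), ← Real.sqrt_eq_rpow,
    eq_comm, Real.sqrt_eq_iff_mul_self_eq_of_pos (by positivity)]
  field_simp
  repeat rw [Real.sq_sqrt (by positivity)]
  linear_combination (-(2 * π * (2 ^ j) ^ 2 * j.factorial * (j + k).factorial * 2 ^ k))
    * Real.mul_self_sqrt Real.pi_pos.le

theorem FW_normalized_hermite' (j k : ℕ) (p q : ℝ) :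
    FW2 (fun x => (eFun j x : ℂ)) (fun x => (eFun (j + k) x : ℂ)) p q
      = (-1 : ℂ)^k
          * (Real.sqrt ((Nat.factorial j : ℝ) / (2 * Real.pi * 2^k * (Nat.factorial (j + k) : ℝ))) : ℂ)
          * (starRingEnd ℂ ((p : ℂ) + Complex.I * q))^k
          * Lag j k ((((‖((p : ℂ) + Complex.I * q)‖)^2 / 2 : ℝ)) : ℂ)
          * Complex.exp (-(((‖((p : ℂ) + Complex.I * q)‖)^2 : ℝ) : ℂ) / 4) := by
  have hnorm : ‖(p : ℂ) + I * q‖ ^ 2 = p ^ 2 + q ^ 2 := by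
    rw [Complex.sq_norm, Complex.normSq_apply]
    simp only [add_re, ofReal_re, mul_re, I_re, ofReal_im, I_im, add_im, mul_im]
    ring
  have hconj : starRingEnd ℂ ((p : ℂ) + I * q) = p - I * q := by
    simp [Complex.conj_ofReal, sub_eq_add_neg]
  rw [FW2_eFun, fwHermite_eq_Lag, hnorm, hconj, ← FW2_eFun_const j k, neg_pow]
  push_cast
  ring
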